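/- arXiv:1703.07556 — 3 statements merged into one kernel-verified Lean document; each statement's English description precedes it below -/
import Mathlib

section
/- If y is a partial post in a causal set C, then the pair (P(y), F(y) ∪ {y}) is a partial break: every element of P(y) precedes every element of F(y) ∪ {y}, the set F(y) ∪ {y} is a future set, and P(y) ∪ F(y) ∪ {y} is a past set. -/
/-- If `y` is a partial post in a causal set `(C, ≺)` (modelled as a type `α` with an
irreflexive transitive relation `r`), then `(P(y), F(y) ∪ {y})` is a partial break:
every element of `P(y)` precedes every element of `F(y) ∪ {y}`, the set `F(y) ∪ {y}`
is a future set, and `P(y) ∪ F(y) ∪ {y}` is a past set. -/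
theorem partial_post_gives_partial_break_below
    {α : Type*} (r : α → α → Prop)
    (hirr : ∀ x, ¬ r x x)
    (htrans : ∀ x y z, r x y → r y z → r x z)
    (y : α)
    (hpp : ∀ x z, r y x → (z ≠ y ∧ ¬ r z y ∧ ¬ r y z) → (z ≠ x ∧ ¬ r z x ∧ ¬ r x z)) :
    (∀ a ∈ {x | r x y}, ∀ b ∈ ({x | r y x} ∪ {y} : Set α), r a b) ∧
    (∀ x ∈ ({x | r y x} ∪ {y} : Set α), ∀ z, r x z → z ∈ ({x | r y x} ∪ {y} : Set α)) ∧
    (∀ x ∈ ({x | r x y} ∪ {x | r y x} ∪ {y} : Set α), ∀ z, r z x →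
      z ∈ ({x | r x y} ∪ {x | r y x} ∪ {y} : Set α)) := by
  refine ⟨?_, ?_, ?_⟩
  · rintro a ha b (hb | rfl)
    · exact htrans a y b ha hb
    · exact ha
  · rintro x (hx | rfl) z hz
    · exact Or.inl (htrans y x z hx hz)
    · exact Or.inl hz
  · rintro x ((hx | hx) | rfl) z hz
    · exact Or.inl (Or.inl (htrans z x y hz hx))
    · by_cases hzy : z = y
      · exact Or.inr hzy
      by_cases h1 : r z y
      · exact Or.inl (Or.inl h1)
      by_cases h2 : r y z
      · exact Or.inl (Or.inr h2)
      · exact absurd hz (hpp x z hx ⟨hzy, h1, h2⟩).2.1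
    · exact Or.inl (Or.inl hz)
end

section
/- Let (t_k)_{k≥0} be a sequence of nonnegative reals and define λ(ϖ, m) = ∑_{k=m}^{ϖ} C(ϖ−m, k−m)·t_k for natural numbers m ≤ ϖ. Fix N ≥ 0 and define t̃_k = ∑_{l=0}^{N} C(N, l)·t_{k+l} for k ≥ 1. Then for all natural numbers 1 ≤ m ≤ ϖ, λ(ϖ + N, m) = ∑_{k=m}^{ϖ} C(ϖ−m, k−m)·t̃_k. -/
open Finset

lemma key_binom (a N : ℕ) (f : ℕ → ℝ) :
    ∑ j ∈ range (a + N + 1), ((a + N).choose j : ℝ) * f j =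
      ∑ i ∈ range (a + 1), ∑ l ∈ range (N + 1),
        (a.choose i : ℝ) * (N.choose l : ℝ) * f (i + l) := by
  set n := a + N + 1 with hn
  have hL : ∑ j ∈ range n, ((a + N).choose j : ℝ) * f j =
      ∑ j ∈ range n, ∑ i ∈ range (j + 1),
        (a.choose i : ℝ) * (N.choose (j - i) : ℝ) * f j := by
    refine Finset.sum_congr rfl fun j _ => ?_
    rw [Nat.add_choose_eq, ← Finset.Nat.sum_antidiagonal_eq_sum_range_succ
      (fun i l => (a.choose i : ℝ) * (N.choose l : ℝ) * f j)]
    push_cast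
    rw [Finset.sum_mul]
  rw [hL]
  have hswap : ∑ j ∈ range n, ∑ i ∈ range (j + 1),
        (a.choose i : ℝ) * (N.choose (j - i) : ℝ) * f j =
      ∑ i ∈ range n, ∑ j ∈ Ico i n,
        (a.choose i : ℝ) * (N.choose (j - i) : ℝ) * f j := by
    simp only [← Nat.Ico_zero_eq_range]
    rw [Finset.sum_Ico_Ico_comm 0 n
      (fun i j => (a.choose i : ℝ) * (N.choose (j - i) : ℝ) * f j)]
  rw [hswap]
  have hsub : ∀ i, ∑ j ∈ Ico i n, (a.choose i : ℝ) * (N.choose (j - i) : ℝ) * f j =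
      ∑ l ∈ range (n - i), (a.choose i : ℝ) * (N.choose l : ℝ) * f (i + l) := by
    intro i
    rw [Finset.sum_Ico_eq_sum_range]
    refine Finset.sum_congr rfl fun l _ => ?_
    rw [Nat.add_sub_cancel_left]
  simp only [hsub]
  have hfull : ∀ (s : ℕ → Finset ℕ),
      (∀ i ∈ range n, s i ⊆ range n ∧
        ∀ l ∈ range n, l ∉ s i → (a.choose i : ℝ) * (N.choose l : ℝ) * f (i + l) = 0) →
      ∑ i ∈ range n, ∑ l ∈ s i, (a.choose i : ℝ) * (N.choose l : ℝ) * f (i + l) =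
      ∑ i ∈ range n, ∑ l ∈ range n, (a.choose i : ℝ) * (N.choose l : ℝ) * f (i + l) := by
    intro s hs
    refine Finset.sum_congr rfl fun i hi => ?_
    exact Finset.sum_subset (hs i hi).1 (fun l hl hl' => (hs i hi).2 l hl hl')
  have h1 := hfull (fun i => range (n - i)) (by
    intro i hi
    constructor
    · exact Finset.range_subset_range.2 (Nat.sub_le _ _)
    · intro l hl hl'
      simp only [mem_range, not_lt] at hl hl'
      have : a < i ∨ N < l := by omega
      rcases this with h | h
      · rw [Nat.choose_eq_zero_of_lt h]; simp
      · rw [Nat.choose_eq_zero_of_lt h]; simp)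
  rw [h1, ← hfull (fun _ => range (N + 1)) (by
    intro i hi
    constructor
    · exact Finset.range_subset_range.2 (by omega)
    · intro l hl hl'
      simp only [mem_range, not_lt] at hl hl'
      rw [Nat.choose_eq_zero_of_lt (by omega : N < l)]; simp)]
  refine (Finset.sum_subset (Finset.range_subset_range.2 (by omega : a + 1 ≤ n)) ?_).symm
  intro i hi hi'
  simp only [mem_range, not_lt] at hi hi'
  rw [Nat.choose_eq_zero_of_lt (by omega : a < i)]
  simp

/-- Cosmic renormalisation identity: with `λ(ϖ, m) = ∑_{k=m}^{ϖ} C(ϖ−m, k−m)·t_k` and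
`t̃_k = ∑_{l=0}^{N} C(N, l)·t_{k+l}`, for all `1 ≤ m ≤ ϖ` we have
`λ(ϖ + N, m) = ∑_{k=m}^{ϖ} C(ϖ−m, k−m)·t̃_k`. -/
theorem cosmic_renormalisation
    (t : ℕ → ℝ) (ht : ∀ k, 0 ≤ t k) (N : ℕ) :
    ∀ m ϖ : ℕ, 1 ≤ m → m ≤ ϖ →
      ∑ k ∈ Finset.Icc m (ϖ + N), ((ϖ + N - m).choose (k - m) : ℝ) * t k =
      ∑ k ∈ Finset.Icc m ϖ, ((ϖ - m).choose (k - m) : ℝ) *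
        (∑ l ∈ Finset.range (N + 1), (N.choose l : ℝ) * t (k + l)) := by
  intro m ϖ _ hmϖ
  set a := ϖ - m with ha
  have hϖ : ϖ = m + a := by omega
  have hL : ∑ k ∈ Finset.Icc m (ϖ + N), ((ϖ + N - m).choose (k - m) : ℝ) * t k =
      ∑ j ∈ range (a + N + 1), ((a + N).choose j : ℝ) * t (m + j) := by
    rw [← Finset.Ico_add_one_right_eq_Icc, Finset.sum_Ico_eq_sum_range]
    have : ϖ + N + 1 - m = a + N + 1 := by omega
    rw [this]
    refine Finset.sum_congr rfl fun j _ => ?_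
    have e1 : ϖ + N - m = a + N := by omega
    have e2 : m + j - m = j := by omega
    rw [e1, e2]
  have hR : ∑ k ∈ Finset.Icc m ϖ, ((ϖ - m).choose (k - m) : ℝ) *
        (∑ l ∈ Finset.range (N + 1), (N.choose l : ℝ) * t (k + l)) =
      ∑ i ∈ range (a + 1), ∑ l ∈ range (N + 1),
        (a.choose i : ℝ) * (N.choose l : ℝ) * t (m + i + l) := by
    rw [← Finset.Ico_add_one_right_eq_Icc, Finset.sum_Ico_eq_sum_range]
    have : ϖ + 1 - m = a + 1 := by omega
    rw [this]
    refine Finset.sum_congr rfl fun i _ => ?_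
    rw [Finset.mul_sum]
    refine Finset.sum_congr rfl fun l _ => ?_
    have h1 : m + i - m = i := by omega
    rw [h1, mul_assoc]
  rw [hL, hR, key_binom a N (fun j => t (m + j))]
  simp only [add_assoc]
end

section
/- Let t_k = t^k for a fixed real t > 0 (transitive percolation). Then for any N ≥ 0, the renormalised constants t̃_k = ∑_{l=0}^{N} C(N, l)·t_{k+l} satisfy t̃_k = (1+t)^N · t^k for all k ≥ 1; hence the renormalised sequence is a positive multiple of the original sequence, i.e., transitive percolation models are fixed points (in projective parameter space) of the cosmic renormalisation transformation on the constants t_k for k ≥ 1. -/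
/-- For transitive percolation `t_k = t^k` with `t > 0`, the renormalised constants
satisfy `t̃_k = (1+t)^N · t^k` for all `k ≥ 1`: the renormalised sequence is a positive
multiple of the original, so transitive percolation is a fixed point of cosmic
renormalisation in projective parameter space. -/
theorem transitive_percolation_fixed_point
    (t : ℝ) (ht : 0 < t) (N : ℕ) :
    ∀ k : ℕ, 1 ≤ k →
      ∑ l ∈ Finset.range (N + 1), (N.choose l : ℝ) * t ^ (k + l) = (1 + t) ^ N * t ^ k := by
  intro k hk
  have h := add_pow t 1 N
  simp only [one_pow, mul_one] at h
  calc ∑ l ∈ Finset.range (N + 1), (N.choose l : ℝ) * t ^ (k + l)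
      = ∑ l ∈ Finset.range (N + 1), (t ^ l * (N.choose l : ℝ)) * t ^ k := by
        refine Finset.sum_congr rfl fun l _ => ?_
        rw [pow_add]; ring
    _ = (1 + t) ^ N * t ^ k := by
        rw [← Finset.sum_mul, ← h, add_comm t 1]
end
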